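/- Let 3 ≤ d₁ ≤ d₂ ≤ d₃ and ω = e^{2πi/3}. In ℂ^{d₁} ⊗ ℂ^{d₂} ⊗ ℂ^{d₃}, the d₃+1 vectors |φ₀⟩ = |000⟩ − |111⟩; |φᵢ⟩ = |i00⟩ + ω|0i0⟩ + ω²|00i⟩ for 1 ≤ i ≤ d₁−1; |φⱼ⟩ = |0j0⟩ − |00j⟩ for d₁ ≤ j ≤ d₂−1; |φₖ⟩ = |00k⟩ − |2,1,(k−1)⟩ for d₂ ≤ k ≤ d₃−1; and the stopper |S⟩ = (∑_{a<d₁}|a⟩)⊗(∑_{b<d₂}|b⟩)⊗(∑_{c<d₃}|c⟩) are pairwise orthogonal. -/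

import Mathlib

open Finset

/-- Coefficient function of the basis vector `|a⟩⊗|b⟩⊗|c⟩` in
`ℂ^{d₁} ⊗ ℂ^{d₂} ⊗ ℂ^{d₃}`. -/
noncomputable def ket3 (d₁ d₂ d₃ : ℕ) (a b c : ℕ) : Fin d₁ → Fin d₂ → Fin d₃ → ℂ :=
  fun x y z => if (x : ℕ) = a ∧ (y : ℕ) = b ∧ (z : ℕ) = c then 1 else 0

/-- The `d₃+1` states of Theorem 4 (Eq. (7)) in `ℂ^{d₁} ⊗ ℂ^{d₂} ⊗ ℂ^{d₃}`,
with `ω = exp(2πi/3)`: index `0` is `|000⟩ − |111⟩`; `1 ≤ i ≤ d₁−1` gives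
`|i00⟩ + ω|0i0⟩ + ω²|00i⟩`; `d₁ ≤ j ≤ d₂−1` gives `|0j0⟩ − |00j⟩`;
`d₂ ≤ k ≤ d₃−1` gives `|00k⟩ − |2,1,(k−1)⟩`; index `d₃` is the stopper. -/
noncomputable def stateT (d₁ d₂ d₃ : ℕ) (i : ℕ) : Fin d₁ → Fin d₂ → Fin d₃ → ℂ :=
  if i = 0 then ket3 d₁ d₂ d₃ 0 0 0 - ket3 d₁ d₂ d₃ 1 1 1
  else if i < d₁ then
    ket3 d₁ d₂ d₃ i 0 0 + (Complex.exp (2 * Real.pi * Complex.I / 3)) • ket3 d₁ d₂ d₃ 0 i 0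
      + (Complex.exp (2 * Real.pi * Complex.I / 3)) ^ 2 • ket3 d₁ d₂ d₃ 0 0 i
  else if i < d₂ then ket3 d₁ d₂ d₃ 0 i 0 - ket3 d₁ d₂ d₃ 0 0 i
  else if i < d₃ then ket3 d₁ d₂ d₃ 0 0 i - ket3 d₁ d₂ d₃ 2 1 (i - 1)
  else fun _ _ _ => 1

/-!
Away from the stopper, each basis triple met by the support of some state determines the index
of that state (`supportIndex`), so distinct such states have disjoint supports. Pairing a state
with the stopper sums its coefficients, which gives `1 - 1 = 0` or `1 + ω + ω² = 0`.
-/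

lemma Fin.sum_ite_val_eq {M : Type*} [AddCommMonoid M] {n a : ℕ} (ha : a < n) (f : Fin n → M) :
    ∑ x : Fin n, (if (x : ℕ) = a then f x else 0) = f ⟨a, ha⟩ := by
  simpa [Fin.ext_iff] using sum_ite_eq' univ (⟨a, ha⟩ : Fin n) f

lemma sum_ket3 {d₁ d₂ d₃ a b c : ℕ} (ha : a < d₁) (hb : b < d₂) (hc : c < d₃) :
    ∑ x : Fin d₁, ∑ y : Fin d₂, ∑ z : Fin d₃, ket3 d₁ d₂ d₃ a b c x y z = 1 := by
  simp only [ket3, ite_and, sum_ite_irrel, sum_const_zero, Fin.sum_ite_val_eq ha,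
    Fin.sum_ite_val_eq hb, Fin.sum_ite_val_eq hc]

lemma one_add_exp_two_pi_I_div_three_add_sq :
    1 + Complex.exp (2 * Real.pi * Complex.I / 3) + Complex.exp (2 * Real.pi * Complex.I / 3) ^ 2
      = 0 := by
  have h := (Complex.isPrimitiveRoot_exp 3 (by norm_num)).geom_sum_eq_zero (by norm_num)
  simpa [sum_range_succ] using h

def supportIndex (x y z : ℕ) : ℕ :=
  if x = y ∧ y = z then 0 else if x = 2 ∧ y = 1 then z + 1 else x + y + z

lemma stateT_apply_eq_zero_of_ne_supportIndex {d₁ d₂ d₃ i : ℕ} (h1 : 3 ≤ d₁) (hi : i < d₃)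
    (x : Fin d₁) (y : Fin d₂) (z : Fin d₃) (hne : i ≠ supportIndex x y z) :
    stateT d₁ d₂ d₃ i x y z = 0 := by
  unfold stateT supportIndex at *
  split_ifs at * <;> simp only [ket3, Pi.add_apply, Pi.sub_apply, Pi.smul_apply] <;> split_ifs <;>
    first | omega | simp

lemma sum_stateT_eq_zero {d₁ d₂ d₃ i : ℕ} (h1 : 3 ≤ d₁) (h2 : d₁ ≤ d₂) (h3 : d₂ ≤ d₃)
    (hi : i < d₃) : ∑ x : Fin d₁, ∑ y : Fin d₂, ∑ z : Fin d₃, stateT d₁ d₂ d₃ i x y z = 0 := by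
  unfold stateT
  split_ifs
  all_goals
    simp only [Pi.add_apply, Pi.sub_apply, Pi.smul_apply, smul_eq_mul, sum_add_distrib,
      sum_sub_distrib, ← mul_sum]
    rw [sum_ket3 (by omega) (by omega) (by omega), sum_ket3 (by omega) (by omega) (by omega)]
  · ring
  · rw [sum_ket3 (by omega) (by omega) (by omega)]
    linear_combination one_add_exp_two_pi_I_div_three_add_sq
  · ring
  · ring

lemma stateT_stopper {d₁ d₂ d₃ : ℕ} (h1 : 3 ≤ d₁) (h2 : d₁ ≤ d₂) (h3 : d₂ ≤ d₃) :
    stateT d₁ d₂ d₃ d₃ = fun _ _ _ => 1 := by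
  rw [stateT, if_neg (by omega), if_neg (by omega), if_neg (by omega), if_neg (by omega)]

theorem statesT_pairwise_orthogonal (d₁ d₂ d₃ : ℕ) (h1 : 3 ≤ d₁) (h2 : d₁ ≤ d₂) (h3 : d₂ ≤ d₃) :
    ∀ i j : ℕ, i ≤ d₃ → j ≤ d₃ → i ≠ j →
      ∑ a : Fin d₁, ∑ b : Fin d₂, ∑ c : Fin d₃,
        (starRingEnd ℂ) (stateT d₁ d₂ d₃ i a b c) * stateT d₁ d₂ d₃ j a b c = 0 := by
  intro i j hi hj hij
  rcases hi.lt_or_eq with hi | rfl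
  · rcases hj.lt_or_eq with hj | rfl
    · refine sum_eq_zero fun x _ => sum_eq_zero fun y _ => sum_eq_zero fun z _ => ?_
      by_cases hx : i = supportIndex x y z
      · rw [stateT_apply_eq_zero_of_ne_supportIndex h1 hj x y z (hx ▸ hij).symm, mul_zero]
      · rw [stateT_apply_eq_zero_of_ne_supportIndex h1 hi x y z hx, map_zero, zero_mul]
    · simp only [stateT_stopper h1 h2 h3, mul_one, ← map_sum, sum_stateT_eq_zero h1 h2 h3 hi,
        map_zero]
  · simp only [stateT_stopper h1 h2 h3, map_one, one_mul,
      sum_stateT_eq_zero h1 h2 h3 (hj.lt_of_ne hij.symm)]
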